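/- arXiv:2603.08793 — 2 statements merged into one kernel-verified Lean document; each statement's English description precedes it below -/
import Mathlib

section
/- Let m be a positive integer, σ > 0, and let p, q be probability distributions on {0,1}^m. Then the squared MMD with Gaussian kernel K_σ admits the spectral representation MMD²(p,q) = Σ_{k ∈ {0,1}^m} P_σ(k)(p̂(k) − q̂(k))², where p̂(k) := Σ_{x ∈ {0,1}^m} p(x)(−1)^{k·x} and similarly for q̂. -/
/-- The Gaussian kernel `K_σ(x,y) = exp(-‖x-y‖²/(2σ²))` on binary vectors `{0,1}^m`,
regarded as vectors in `ℝ^m`. -/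
noncomputable def gaussKernel {m : ℕ} (σ : ℝ) (x y : Fin m → Fin 2) : ℝ :=
  Real.exp (-(∑ i, (((x i : ℕ) : ℝ) - ((y i : ℕ) : ℝ)) ^ 2) / (2 * σ ^ 2))

/-- The squared maximum mean discrepancy between distributions `p, q` on a finite set,
with respect to a kernel `K`. -/
noncomputable def mmdSq {X : Type*} [Fintype X] (K : X → X → ℝ) (p q : X → ℝ) : ℝ :=
  ∑ x, ∑ y, p x * p y * K x y - 2 * ∑ x, ∑ y, p x * q y * K x y
    + ∑ x, ∑ y, q x * q y * K x y

/-- `p_σ = (1 - e^{-1/(2σ²)})/2`. -/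
noncomputable def pSigma (σ : ℝ) : ℝ := (1 - Real.exp (-(1 / (2 * σ ^ 2)))) / 2

/-- The product Bernoulli distribution `P_σ(k) = p_σ^{|k|} (1-p_σ)^{m-|k|}` on bitstrings
`k ∈ {0,1}^m`, where `|k|` is the Hamming weight of `k`. -/
noncomputable def Psigma {m : ℕ} (σ : ℝ) (k : Fin m → Fin 2) : ℝ :=
  pSigma σ ^ (∑ i, (k i : ℕ)) * (1 - pSigma σ) ^ (m - ∑ i, (k i : ℕ))

/-- The Fourier coefficient `p̂(k) = ∑_{x ∈ {0,1}^m} p(x) (-1)^{k·x}`. -/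
noncomputable def walshCoeff {m : ℕ} (p : (Fin m → Fin 2) → ℝ) (k : Fin m → Fin 2) : ℝ :=
  ∑ x, p x * (-1 : ℝ) ^ (∑ i, (k i : ℕ) * (x i : ℕ))

lemma coord (σ : ℝ) (a b : Fin 2) :
    Real.exp (-((((a:ℕ):ℝ) - ((b:ℕ):ℝ))^2) / (2*σ^2)) =
      ∑ k : Fin 2, pSigma σ ^ (k:ℕ) * (1 - pSigma σ)^(1 - (k:ℕ)) *
        ((-1:ℝ)^((k:ℕ)*(a:ℕ)) * (-1:ℝ)^((k:ℕ)*(b:ℕ))) := by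
  fin_cases a <;> fin_cases b <;> simp [pSigma, Fin.sum_univ_two] <;> ring_nf

lemma weight_compl {m : ℕ} (k : Fin m → Fin 2) :
    ∑ i, (1 - (k i : ℕ)) = m - ∑ i, (k i : ℕ) := by
  have h1 : ∑ i, ((k i : ℕ) + (1 - (k i : ℕ))) = m := by
    have : ∀ i, (k i : ℕ) + (1 - (k i : ℕ)) = 1 := fun i => by
      have := (k i).is_lt; omega
    simp [this]
  rw [Finset.sum_add_distrib] at h1
  omega

lemma kernel_spectral {m : ℕ} (σ : ℝ) (x y : Fin m → Fin 2) :
    gaussKernel σ x y = ∑ k : Fin m → Fin 2, Psigma σ k *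
      ((-1:ℝ)^(∑ i, (k i:ℕ)*(x i:ℕ)) * (-1:ℝ)^(∑ i, (k i:ℕ)*(y i:ℕ))) := by
  have h1 : gaussKernel σ x y
      = ∏ i, Real.exp (-((((x i:ℕ):ℝ) - ((y i:ℕ):ℝ))^2) / (2*σ^2)) := by
    rw [gaussKernel, neg_div, Finset.sum_div, ← Finset.sum_neg_distrib, Real.exp_sum]
    exact Finset.prod_congr rfl fun i _ => by rw [neg_div]
  rw [h1]
  have h2 : ∀ i ∈ Finset.univ, Real.exp (-((((x i:ℕ):ℝ) - ((y i:ℕ):ℝ))^2) / (2*σ^2))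
      = ∑ k : Fin 2, pSigma σ ^ (k:ℕ) * (1 - pSigma σ)^(1 - (k:ℕ)) *
        ((-1:ℝ)^((k:ℕ)*(x i:ℕ)) * (-1:ℝ)^((k:ℕ)*(y i:ℕ))) := fun i _ => coord σ _ _
  rw [Finset.prod_congr rfl h2, Finset.prod_univ_sum]
  refine Finset.sum_congr rfl fun k _ => ?_
  rw [Psigma, ← weight_compl k]
  simp only [Finset.prod_mul_distrib, Finset.prod_pow_eq_pow_sum]


lemma cross {m : ℕ} (σ : ℝ) (f g : (Fin m → Fin 2) → ℝ) :
    ∑ x, ∑ y, f x * g y * gaussKernel σ x y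
      = ∑ k, Psigma σ k * (walshCoeff f k * walshCoeff g k) := by
  have h : ∀ x y : Fin m → Fin 2, f x * g y * gaussKernel σ x y
      = ∑ k, Psigma σ k * ((f x * (-1:ℝ)^(∑ i, (k i:ℕ)*(x i:ℕ)))
          * (g y * (-1:ℝ)^(∑ i, (k i:ℕ)*(y i:ℕ)))) := by
    intro x y
    rw [kernel_spectral, Finset.mul_sum]
    exact Finset.sum_congr rfl fun k _ => by ring
  simp only [h]
  refine Eq.symm ?_
  calc (∑ k, Psigma σ k * (walshCoeff f k * walshCoeff g k))
      = ∑ k : Fin m → Fin 2, ∑ x : Fin m → Fin 2, ∑ y : Fin m → Fin 2,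
          Psigma σ k * ((f x * (-1:ℝ)^(∑ i, (k i:ℕ)*(x i:ℕ)))
            * (g y * (-1:ℝ)^(∑ i, (k i:ℕ)*(y i:ℕ)))) := by
        refine Finset.sum_congr rfl fun k _ => ?_
        rw [walshCoeff, walshCoeff, Finset.sum_mul_sum, Finset.mul_sum]
        refine Finset.sum_congr rfl fun x _ => ?_
        rw [Finset.mul_sum]
    _ = ∑ x : Fin m → Fin 2, ∑ k : Fin m → Fin 2, ∑ y : Fin m → Fin 2,
          Psigma σ k * ((f x * (-1:ℝ)^(∑ i, (k i:ℕ)*(x i:ℕ)))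
            * (g y * (-1:ℝ)^(∑ i, (k i:ℕ)*(y i:ℕ)))) := Finset.sum_comm
    _ = ∑ x : Fin m → Fin 2, ∑ y : Fin m → Fin 2, ∑ k : Fin m → Fin 2,
          Psigma σ k * ((f x * (-1:ℝ)^(∑ i, (k i:ℕ)*(x i:ℕ)))
            * (g y * (-1:ℝ)^(∑ i, (k i:ℕ)*(y i:ℕ)))) :=
        Finset.sum_congr rfl fun x _ => Finset.sum_comm


/-- For `m` a positive integer, `σ > 0`, and `p, q` probability distributions on `{0,1}^m`,
the squared MMD with Gaussian kernel `K_σ` admits the spectral representation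
`MMD²(p,q) = ∑_{k ∈ {0,1}^m} P_σ(k) (p̂(k) - q̂(k))²`. -/
theorem mmdSq_eq_spectral (m : ℕ) (hm : 0 < m) (σ : ℝ) (hσ : 0 < σ)
    (p q : (Fin m → Fin 2) → ℝ)
    (hp0 : ∀ x, 0 ≤ p x) (hp1 : ∑ x, p x = 1)
    (hq0 : ∀ x, 0 ≤ q x) (hq1 : ∑ x, q x = 1) :
    mmdSq (gaussKernel σ) p q =
      ∑ k : Fin m → Fin 2, Psigma σ k * (walshCoeff p k - walshCoeff q k) ^ 2 := by
  rw [mmdSq, cross σ p p, cross σ p q, cross σ q q, Finset.mul_sum,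
    ← Finset.sum_sub_distrib, ← Finset.sum_add_distrib]
  exact Finset.sum_congr rfl fun k _ => by ring
end

section
/- Let m be a positive integer and σ > 0. Regard 2^m × 2^m complex matrices as indexed by bitstrings in {0,1}^m, and for k ∈ {0,1}^m let Z^k be the diagonal matrix with diagonal entry (−1)^{k·x} at position x. Let O be the diagonal matrix on the product index set {0,1}^m × {0,1}^m whose diagonal entry at (x,y) is K_σ(x,y). Then O = Σ_{k ∈ {0,1}^m} P_σ(k) (Z^k ⊗ Z^k), where ⊗ is the Kronecker product. -/
open Kronecker

/-- For a bitstring `k ∈ {0,1}^m`, the `2^m × 2^m` diagonal matrix `Z^k` whose diagonal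
entry at position `x ∈ {0,1}^m` is `(-1)^{k·x}`. -/
noncomputable def Zpow {m : ℕ} (k : Fin m → Fin 2) :
    Matrix (Fin m → Fin 2) (Fin m → Fin 2) ℂ :=
  Matrix.diagonal fun x => (-1 : ℂ) ^ (∑ i, (k i : ℕ) * (x i : ℕ))

lemma coordCase (σ : ℝ) (a b : Fin 2) :
    Complex.exp (-((((a : ℕ) : ℂ) - ((b : ℕ) : ℂ)) ^ 2) / (2 * (σ : ℂ) ^ 2))
      = ∑ c : Fin 2, ((pSigma σ : ℂ) ^ (c : ℕ) * ((1 : ℂ) - (pSigma σ : ℂ)) ^ (1 - (c : ℕ)) *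
          ((-1 : ℂ) ^ ((c : ℕ) * (a : ℕ)) * (-1 : ℂ) ^ ((c : ℕ) * (b : ℕ)))) := by
  have he : ((Real.exp (-(1 / (2 * σ ^ 2))) : ℝ) : ℂ)
      = Complex.exp (-(1 / (2 * (σ : ℂ) ^ 2))) := by
    rw [Complex.ofReal_exp]; norm_cast
  fin_cases a <;> fin_cases b <;>
    simp [Fin.sum_univ_two, pSigma, ← he] <;> push_cast <;> ring_nf <;>
    rw [← he] <;> push_cast <;> ring

lemma keyScalar (m : ℕ) (σ : ℝ) (x y : Fin m → Fin 2) :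
    ((gaussKernel σ x y : ℝ) : ℂ)
      = ∑ k : Fin m → Fin 2, (Psigma σ k : ℂ) *
          ((-1 : ℂ) ^ (∑ i, (k i : ℕ) * (x i : ℕ)) *
           (-1 : ℂ) ^ (∑ i, (k i : ℕ) * (y i : ℕ))) := by
  have hterm : ∀ k : Fin m → Fin 2,
      (Psigma σ k : ℂ) * ((-1 : ℂ) ^ (∑ i, (k i : ℕ) * (x i : ℕ)) *
        (-1 : ℂ) ^ (∑ i, (k i : ℕ) * (y i : ℕ)))
      = ∏ i, ((pSigma σ : ℂ) ^ ((k i : ℕ)) * ((1 : ℂ) - (pSigma σ : ℂ)) ^ (1 - (k i : ℕ)) *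
          ((-1 : ℂ) ^ ((k i : ℕ) * (x i : ℕ)) * (-1 : ℂ) ^ ((k i : ℕ) * (y i : ℕ)))) := by
    intro k
    have h1 : ∀ i, (k i : ℕ) ≤ 1 := fun i => Nat.lt_succ_iff.mp (k i).isLt
    have hsum : (∑ i, (1 - (k i : ℕ))) = m - ∑ i, (k i : ℕ) := by
      have h2 : (∑ i, (k i : ℕ)) + (∑ i, (1 - (k i : ℕ))) = m := by
        rw [← Finset.sum_add_distrib]
        rw [Finset.sum_congr rfl (fun i _ => by have := h1 i; omega : ∀ i ∈ Finset.univ, (k i : ℕ) + (1 - (k i : ℕ)) = 1)]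
        simp
      omega
    simp only [Psigma, Complex.ofReal_mul, Complex.ofReal_pow, Complex.ofReal_sub,
      Complex.ofReal_one]
    rw [← hsum]
    rw [Finset.prod_mul_distrib, Finset.prod_mul_distrib, Finset.prod_mul_distrib,
      Finset.prod_pow_eq_pow_sum, Finset.prod_pow_eq_pow_sum, Finset.prod_pow_eq_pow_sum,
      Finset.prod_pow_eq_pow_sum]
  calc ((gaussKernel σ x y : ℝ) : ℂ)
      = ∏ i, Complex.exp (-((((x i : ℕ) : ℂ) - ((y i : ℕ) : ℂ)) ^ 2) / (2 * (σ : ℂ) ^ 2)) := by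
        rw [gaussKernel, Complex.ofReal_exp, ← Complex.exp_sum]
        congr 1
        push_cast
        simp [neg_div, Finset.sum_div, Finset.sum_neg_distrib]
    _ = ∏ i, ∑ c : Fin 2, ((pSigma σ : ℂ) ^ (c : ℕ) * ((1 : ℂ) - (pSigma σ : ℂ)) ^ (1 - (c : ℕ)) *
          ((-1 : ℂ) ^ ((c : ℕ) * ((x i : ℕ))) * (-1 : ℂ) ^ ((c : ℕ) * ((y i : ℕ))))) :=
        Finset.prod_congr rfl (fun i _ => coordCase σ (x i) (y i))
    _ = ∑ k ∈ Fintype.piFinset (fun _ : Fin m => (Finset.univ : Finset (Fin 2))),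
          ∏ i, ((pSigma σ : ℂ) ^ ((k i : ℕ)) * ((1 : ℂ) - (pSigma σ : ℂ)) ^ (1 - (k i : ℕ)) *
          ((-1 : ℂ) ^ ((k i : ℕ) * ((x i : ℕ))) * (-1 : ℂ) ^ ((k i : ℕ) * ((y i : ℕ))))) :=
        Finset.prod_univ_sum _ _
    _ = ∑ k : Fin m → Fin 2,
          ∏ i, ((pSigma σ : ℂ) ^ ((k i : ℕ)) * ((1 : ℂ) - (pSigma σ : ℂ)) ^ (1 - (k i : ℕ)) *
          ((-1 : ℂ) ^ ((k i : ℕ) * ((x i : ℕ))) * (-1 : ℂ) ^ ((k i : ℕ) * ((y i : ℕ))))) := by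
        rw [Fintype.piFinset_univ]
    _ = _ := Finset.sum_congr rfl (fun k _ => (hterm k).symm)

/-- Let `m` be a positive integer and `σ > 0`.  Let `O` be the diagonal matrix on the
product index set `{0,1}^m × {0,1}^m` whose diagonal entry at `(x,y)` is `K_σ(x,y)`.
Then `O = ∑_{k ∈ {0,1}^m} P_σ(k) (Z^k ⊗ Z^k)`, with `⊗` the Kronecker product. -/
theorem mmd_observable_eq_sum_kronecker (m : ℕ) (hm : 0 < m) (σ : ℝ) (hσ : 0 < σ) :
    (Matrix.diagonal fun xy : (Fin m → Fin 2) × (Fin m → Fin 2) =>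
        (gaussKernel σ xy.1 xy.2 : ℂ))
      = ∑ k : Fin m → Fin 2, (Psigma σ k : ℂ) • (Zpow k ⊗ₖ Zpow k) := by
  ext i j
  rcases eq_or_ne i j with rfl | h
  · rw [Matrix.diagonal_apply_eq]
    simp only [Matrix.sum_apply, Matrix.smul_apply, Zpow,
      Matrix.diagonal_kronecker_diagonal, Matrix.diagonal_apply_eq, smul_eq_mul]
    exact keyScalar m σ i.1 i.2
  · rw [Matrix.diagonal_apply_ne _ h]
    simp only [Matrix.sum_apply, Matrix.smul_apply, Zpow,
      Matrix.diagonal_kronecker_diagonal, Matrix.diagonal_apply_ne _ h, smul_eq_mul,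
      mul_zero]
    simp
end
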